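/- Let G be a growth order group and N a normal, ≼-initial subgroup such that for all f, g ∈ G \ N, [f,g] ∈ N implies f ≍ g. Then the quotient G/N, with the order gN < hN iff g < h (for g, h in distinct cosets), is a growth order group. -/

import Mathlib

namespace GOG

variable {α : Type*}

/-- Centraliser of `g` with respect to an abstract multiplication. -/
def Cent (mul : α → α → α) (g : α) : Set α := {h | mul h g = mul g h}

/-- `f ≼ g`: `f` lies in the convex hull of the centraliser of `g` (or `f = 1`). -/
def Preceq (mul : α → α → α) (one : α) (le : α → α → Prop) (f g : α) : Prop :=
  f = one ∨ (g ≠ one ∧ ∃ a ∈ Cent mul g, ∃ b ∈ Cent mul g, le a f ∧ le f b)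

/-- Strict part `f ≺ g`. -/
def Prec (mul : α → α → α) (one : α) (le : α → α → Prop) (f g : α) : Prop :=
  Preceq mul one le f g ∧ ¬ Preceq mul one le g f

/-- `f ≍ g`. -/
def Asymp (mul : α → α → α) (one : α) (le : α → α → Prop) (f g : α) : Prop :=
  Preceq mul one le f g ∧ Preceq mul one le g f

/-- `g ∼ h` iff `g h⁻¹ ≺ g`. -/
def Sim (mul : α → α → α) (one : α) (inv : α → α) (le : α → α → Prop) (g h : α) : Prop :=
  Prec mul one le (mul g (inv h)) g

/-- Axiom GOG1. -/
def GOG1 (mul : α → α → α) (one : α) (lt le : α → α → Prop) : Prop :=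
  ∀ f g : α, lt one f → lt one g → le g f →
    ∀ g₀ ∈ Cent mul g, ∃ f₀ ∈ Cent mul f, le g₀ f₀

/-- Axiom GOG2: if `f > C(g)` then `f g > g f`. -/
def GOG2 (mul : α → α → α) (one : α) (lt : α → α → Prop) : Prop :=
  ∀ f g : α, lt one f → lt one g → (∀ h ∈ Cent mul g, lt h f) → lt (mul g f) (mul f g)

/-- `s` is a scaling element. -/
def Scaling (mul : α → α → α) (one : α) (inv : α → α) (lt le : α → α → Prop) (s : α) : Prop :=
  lt one s ∧ (∀ a ∈ Cent mul s, ∀ b ∈ Cent mul s, mul a b = mul b a) ∧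
    ∀ f : α, Asymp mul one le f s → ∃ g ∈ Cent mul s, g ≠ one ∧ Sim mul one inv le g f

/-- Axiom GOG3: every growth rank contains a scaling element. -/
def GOG3 (mul : α → α → α) (one : α) (inv : α → α) (lt le : α → α → Prop) : Prop :=
  ∀ g : α, g ≠ one → ∃ s : α, Scaling mul one inv lt le s ∧ Asymp mul one le s g

/-- Being a (bi-ordered) linearly ordered group, for abstract operations. -/
def IsOrderedGroup (mul : α → α → α) (one : α) (inv : α → α) (lt : α → α → Prop) : Prop :=
  (∀ a b c : α, mul (mul a b) c = mul a (mul b c)) ∧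
    (∀ a : α, mul one a = a) ∧ (∀ a : α, mul a one = a) ∧
    (∀ a : α, mul (inv a) a = one) ∧
    (∀ a : α, ¬ lt a a) ∧ (∀ a b c : α, lt a b → lt b c → lt a c) ∧
    (∀ a b : α, lt a b ∨ a = b ∨ lt b a) ∧
    (∀ f g h : α, lt g h → lt (mul f g) (mul f h) ∧ lt (mul g f) (mul h f))

/-- Growth order group: ordered group satisfying GOG1, GOG2 and GOG3. -/
def IsGrowthOrderGroup (mul : α → α → α) (one : α) (inv : α → α) (lt le : α → α → Prop) : Prop :=
  IsOrderedGroup mul one inv lt ∧ GOG1 mul one lt le ∧ GOG2 mul one lt ∧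
    GOG3 mul one inv lt le

end GOG

/-!
Because `N` is `≼`-initial it is order-convex, so `gN < hN` does not depend on the
representatives and the quotient is a bi-ordered group. A coset commuting with `yN` (`y ∉ N`)
has, by the commutator hypothesis, a representative `≍ y`; hence centralisers in `G ⧸ N` are
images of convex hulls of centralisers in `G`, and `≼` between nontrivial cosets is `≼` between
their representatives. GOG1, GOG2 and the growth ranks then pass to the quotient directly.

The remaining point is that the image of a scaling element `s ∉ N` is scaling, i.e. that its
centraliser in `G ⧸ N` is abelian. It is the image of `C(s)`: if `aN` commutes with `sN`, the
scaling property gives `c ∈ C(s)` with `c a⁻¹ ≺ c`. If `c a⁻¹ ∉ N`, then `c a⁻¹ ≍ s`, but by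
GOG1 every nontrivial element of `C(s)` is `≼` every element `≍ s`; so `c a⁻¹ ∈ N`.
-/

theorem Commute.of_mul_self_right {G : Type*} [Group G] [LinearOrder G] [MulLeftStrictMono G]
    [MulRightStrictMono G] {f m : G} (h : Commute f (m * m)) : Commute f m := by
  have hsq : (f * m * f⁻¹) ^ 2 = m ^ 2 := by
    rw [conj_pow, sq, h.eq, mul_inv_cancel_right]
  exact mul_inv_eq_iff_eq_mul.mp ((pow_left_strictMono two_ne_zero).injective hsq)

theorem Commute.quotientMk {G : Type*} [Group G] {N : Subgroup G} [N.Normal] {a b : G}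
    (h : Commute a b) : Commute (a : G ⧸ N) b :=
  h.map (QuotientGroup.mk' N)

namespace GOG

open QuotientGroup

theorem preceq_one_iff {M : Type*} {mul : M → M → M} {one : M} {le : M → M → Prop} {f : M} :
    Preceq mul one le f one ↔ f = one :=
  ⟨fun h => h.resolve_right fun h => h.1 rfl, Or.inl⟩

section Monoid

variable {M : Type*} [Monoid M] [Preorder M] {a b f g x : M}

theorem preceq_of_mem_cent (hf : f ∈ Cent (· * ·) g) (hg : g ≠ 1) :
    Preceq (· * ·) (1 : M) (· ≤ ·) f g :=
  Or.inr ⟨hg, f, hf, f, hf, le_rfl, le_rfl⟩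

theorem Preceq.exists_mem_cent_le (h : Preceq (· * ·) (1 : M) (· ≤ ·) f g) :
    ∃ a ∈ Cent (· * ·) g, a ≤ f := by
  rcases h with rfl | ⟨-, a, ha, -, -, haf, -⟩
  · exact ⟨1, Commute.one_left g, le_rfl⟩
  · exact ⟨a, ha, haf⟩

theorem Preceq.exists_le_mem_cent (h : Preceq (· * ·) (1 : M) (· ≤ ·) f g) :
    ∃ b ∈ Cent (· * ·) g, f ≤ b := by
  rcases h with rfl | ⟨-, -, -, b, hb, -, hfb⟩
  · exact ⟨1, Commute.one_left g, le_rfl⟩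
  · exact ⟨b, hb, hfb⟩

theorem preceq_of_le_of_le (hg : g ≠ 1) (ha : Preceq (· * ·) (1 : M) (· ≤ ·) a g)
    (hb : Preceq (· * ·) (1 : M) (· ≤ ·) b g) (hax : a ≤ x) (hxb : x ≤ b) :
    Preceq (· * ·) (1 : M) (· ≤ ·) x g := by
  obtain ⟨a', ha', ha'a⟩ := ha.exists_mem_cent_le
  obtain ⟨b', hb', hbb'⟩ := hb.exists_le_mem_cent
  exact Or.inr ⟨hg, a', ha', b', hb', ha'a.trans hax, hxb.trans hbb'⟩

end Monoid

theorem Preceq.inv_right {G : Type*} [Group G] [LE G] {x y : G}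
    (h : Preceq (· * ·) (1 : G) (· ≤ ·) x y) : Preceq (· * ·) (1 : G) (· ≤ ·) x y⁻¹ := by
  rcases h with rfl | ⟨hy, a, ha, b, hb, hax, hxb⟩
  · exact Or.inl rfl
  · exact Or.inr ⟨inv_ne_one.mpr hy, a, Commute.inv_right ha, b, Commute.inv_right hb, hax, hxb⟩

section OrderedGroup

variable {G : Type*} [Group G] [LinearOrder G] [MulLeftStrictMono G] [MulRightStrictMono G]
  {c m s x y : G}

attribute [local instance] mulLeftMono_of_mulLeftStrictMono mulRightMono_of_mulRightStrictMono

theorem Preceq.inv_left (h : Preceq (· * ·) (1 : G) (· ≤ ·) x y) :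
    Preceq (· * ·) (1 : G) (· ≤ ·) x⁻¹ y := by
  rcases h with rfl | ⟨hy, a, ha, b, hb, hax, hxb⟩
  · exact Or.inl inv_one
  · exact Or.inr ⟨hy, b⁻¹, Commute.inv_left hb, a⁻¹, Commute.inv_left ha,
      inv_le_inv_iff.mpr hxb, inv_le_inv_iff.mpr hax⟩

theorem Scaling.preceq_of_one_lt (h1 : GOG1 (· * ·) (1 : G) (· < ·) (· ≤ ·))
    (hs : Scaling (· * ·) (1 : G) (·⁻¹) (· < ·) (· ≤ ·) s)
    (hms : Asymp (· * ·) (1 : G) (· ≤ ·) m s) (hc : c ∈ Cent (· * ·) s) (hm : 1 < m)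
    (hc1 : 1 < c) : Preceq (· * ·) (1 : G) (· ≤ ·) c m := by
  obtain ⟨-, hcomm, hsim⟩ := hs
  obtain ⟨d, hd, hd1, -, hdm⟩ := hsim m hms
  -- `d ⋠ d m⁻¹`, yet `1`, `d m⁻¹` and `(d m⁻¹)²` centralise `d m⁻¹`: this pins `1 < d ≤ m²`
  have hd_bounds : 1 < d ∧ d ≤ m * m := by
    by_cases hn : d * m⁻¹ = 1
    · obtain rfl := mul_inv_eq_one.mp hn
      exact ⟨hm, le_mul_of_one_le_left' hm.le⟩
    have hd : 1 < d := by
      refine (lt_or_gt_of_ne hd1).resolve_left fun hd => hdm ?_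
      exact Or.inr ⟨hn, d * m⁻¹, Commute.refl _, 1, Commute.one_left _,
        (mul_lt_of_lt_one_right' d (inv_lt_one'.mpr hm)).le, hd.le⟩
    have hsq : d * m⁻¹ * (d * m⁻¹) < d := not_le.mp fun h => hdm (Or.inr ⟨hn, 1,
      Commute.one_left _, _, (Commute.refl _).mul_left (Commute.refl _), hd.le, h⟩)
    have hmid : m⁻¹ * d * m⁻¹ < 1 :=
      lt_of_mul_lt_mul_left' (a := d) (by simpa [mul_assoc] using hsq)
    refine ⟨hd, le_of_lt ?_⟩
    calc d = m * (m⁻¹ * d * m⁻¹) * m := by group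
      _ < m * 1 * m := by gcongr
      _ = m * m := by rw [mul_one]
  obtain ⟨f₀, hf₀, hcf₀⟩ :=
    h1 (m * m) d (one_lt_mul' hm hm) hd_bounds.1 hd_bounds.2 c (hcomm c hc d hd)
  exact Or.inr ⟨hm.ne', 1, Commute.one_left m, f₀, Commute.of_mul_self_right hf₀, hc1.le, hcf₀⟩

theorem Scaling.preceq (h1 : GOG1 (· * ·) (1 : G) (· < ·) (· ≤ ·))
    (hs : Scaling (· * ·) (1 : G) (·⁻¹) (· < ·) (· ≤ ·) s)
    (hms : Asymp (· * ·) (1 : G) (· ≤ ·) m s) (hc : c ∈ Cent (· * ·) s) (hc1 : c ≠ 1) :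
    Preceq (· * ·) (1 : G) (· ≤ ·) c m := by
  have hm1 : m ≠ 1 := by
    rintro rfl
    exact hs.1.ne' (preceq_one_iff.mp hms.2)
  suffices ∀ {m}, Asymp (· * ·) (1 : G) (· ≤ ·) m s → 1 < m →
      Preceq (· * ·) (1 : G) (· ≤ ·) c m by
    rcases lt_or_gt_of_ne hm1 with hm | hm
    · simpa using (this ⟨hms.1.inv_left, hms.2.inv_right⟩ (one_lt_inv'.mpr hm)).inv_right
    · exact this hms hm
  intro m hms hm
  rcases lt_or_gt_of_ne hc1 with hc' | hc'
  · simpa using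
      (hs.preceq_of_one_lt h1 hms (Commute.inv_left hc) hm (one_lt_inv'.mpr hc')).inv_left
  · exact hs.preceq_of_one_lt h1 hms hc hm hc'

end OrderedGroup

section Quotient

variable {G : Type*} [Group G] [PartialOrder G] (N : Subgroup G)

def IsPreceqInitial : Prop :=
  ∀ f ∈ N, ∀ g : G, Preceq (· * ·) (1 : G) (· ≤ ·) g f → g ∈ N

def AsympOfCommutatorMem : Prop :=
  ∀ f g : G, f ∉ N → g ∉ N → f⁻¹ * g⁻¹ * f * g ∈ N → Asymp (· * ·) (1 : G) (· ≤ ·) f g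

-- Only some representatives are required to be ordered; for convex `N` all of them are
-- (`IsPreceqInitial.cosetLT_mk_iff`).
def CosetLT (a b : G ⧸ N) : Prop :=
  a ≠ b ∧ ∃ g h : G, (g : G ⧸ N) = a ∧ (h : G ⧸ N) = b ∧ g < h

def CosetLE (a b : G ⧸ N) : Prop :=
  CosetLT N a b ∨ a = b

variable {N} {x y : G}

theorem IsPreceqInitial.ordConnected [MulLeftStrictMono G] (hN : IsPreceqInitial N) :
    (N : Set G).OrdConnected := by
  have := mulLeftMono_of_mulLeftStrictMono G
  refine ⟨fun a ha b hb t ⟨hat, htb⟩ => ?_⟩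
  by_cases hab : a = b
  · subst hab
    rwa [le_antisymm htb hat]
  suffices a⁻¹ * t ∈ N by simpa using N.mul_mem ha this
  exact hN _ (N.mul_mem (N.inv_mem ha) hb) _ (Or.inr ⟨by rwa [Ne, inv_mul_eq_one], 1,
    Commute.one_left _, _, Commute.refl _, le_inv_mul_iff_mul_le.mpr (by simpa using hat),
    by gcongr⟩)

theorem cosetLE_mk_of_le (h : x ≤ y) : CosetLE N x y := by
  by_cases hxy : (x : G ⧸ N) = y
  · exact Or.inr hxy
  · exact Or.inl ⟨hxy, x, y, rfl, rfl, h.lt_of_ne (by rintro rfl; exact hxy rfl)⟩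

variable [N.Normal]

theorem AsympOfCommutatorMem.asymp (hc : AsympOfCommutatorMem N) (hx : x ∉ N) (hy : y ∉ N)
    (h : Commute (x : G ⧸ N) y) : Asymp (· * ·) (1 : G) (· ≤ ·) x y :=
  hc x y hx hy <| (eq_one_iff _).mp <| by
    rw [mk_mul, mk_mul, mk_mul, mk_inv, mk_inv, mul_assoc, h.eq]
    group

theorem AsympOfCommutatorMem.exists_mk_eq_preceq (hc : AsympOfCommutatorMem N) (hy : y ∉ N)
    {b' : G ⧸ N} (hb' : b' ∈ Cent (· * ·) (y : G ⧸ N)) :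
    ∃ b : G, (b : G ⧸ N) = b' ∧ Preceq (· * ·) (1 : G) (· ≤ ·) b y := by
  obtain ⟨b, rfl⟩ := mk_surjective b'
  by_cases hb : b ∈ N
  · exact ⟨1, by rwa [mk_one, eq_comm, eq_one_iff], Or.inl rfl⟩
  · exact ⟨b, rfl, (hc.asymp hb hy hb').1⟩

end Quotient

section OrderedQuotient

variable {G : Type*} [Group G] [LinearOrder G] [MulLeftStrictMono G] [MulRightStrictMono G]
  {N : Subgroup G} {g h s x y : G}

attribute [local instance] mulLeftMono_of_mulLeftStrictMono mulRightMono_of_mulRightStrictMono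

theorem IsPreceqInitial.lt_of_mk_eq (hN : IsPreceqInitial N) (hgx : (g : G ⧸ N) = x)
    (hhy : (h : G ⧸ N) = y) (hxy : (x : G ⧸ N) ≠ y) (hgh : g < h) : x < y := by
  by_contra! hyx
  refine hxy (hgx ▸ hhy ▸ QuotientGroup.eq.mpr (hN.ordConnected.out N.one_mem
    (N.mul_mem (QuotientGroup.eq.mp hgx) (N.inv_mem (QuotientGroup.eq.mp hhy))) ⟨?_, ?_⟩))
  · exact le_inv_mul_iff_mul_le.mpr (by simpa using hgh.le)
  · calc g⁻¹ * h = g⁻¹ * 1 * h := by group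
      _ ≤ g⁻¹ * (x * y⁻¹) * h := by gcongr; exact le_mul_inv_iff_mul_le.mpr (by simpa using hyx)
      _ = g⁻¹ * x * (h⁻¹ * y)⁻¹ := by group

theorem IsPreceqInitial.cosetLT_mk_iff (hN : IsPreceqInitial N) :
    CosetLT N x y ↔ (x : G ⧸ N) ≠ y ∧ x < y :=
  ⟨fun ⟨hxy, _, _, hgx, hhy, hgh⟩ => ⟨hxy, hN.lt_of_mk_eq hgx hhy hxy hgh⟩,
    fun ⟨hxy, hlt⟩ => ⟨hxy, x, y, rfl, rfl, hlt⟩⟩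

theorem IsPreceqInitial.cosetLE_mk_iff (hN : IsPreceqInitial N) :
    CosetLE N x y ↔ x < y ∨ (x : G ⧸ N) = y := by
  rw [CosetLE, hN.cosetLT_mk_iff]
  tauto

variable [N.Normal]

theorem IsPreceqInitial.cosetLT_one_mk_iff (hN : IsPreceqInitial N) :
    CosetLT N 1 x ↔ x ∉ N ∧ 1 < x := by
  rw [← mk_one, hN.cosetLT_mk_iff, ne_comm, Ne, mk_one, eq_one_iff]

theorem preceq_mk_iff (hN : IsPreceqInitial N) (hc : AsympOfCommutatorMem N) (hx : x ∉ N)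
    (hy : y ∉ N) :
    Preceq (· * ·) (1 : G ⧸ N) (CosetLE N) x y ↔ Preceq (· * ·) (1 : G) (· ≤ ·) x y := by
  constructor
  · rintro (hx1 | ⟨-, a', ha', b', hb', hax, hxb⟩)
    · exact absurd ((eq_one_iff x).mp hx1) hx
    by_cases hxy : Commute (x : G ⧸ N) y
    · exact (hc.asymp hx hy hxy).1
    obtain ⟨a, rfl, ha⟩ := hc.exists_mk_eq_preceq hy ha'
    obtain ⟨b, rfl, hb⟩ := hc.exists_mk_eq_preceq hy hb'
    have hax : a < x := (hN.cosetLE_mk_iff.mp hax).resolve_right fun h => hxy (h ▸ ha')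
    have hxb : x < b := (hN.cosetLE_mk_iff.mp hxb).resolve_right fun h => hxy (h ▸ hb')
    exact preceq_of_le_of_le (fun h => hy (h ▸ N.one_mem)) ha hb hax.le hxb.le
  · rintro (rfl | ⟨-, a, ha, b, hb, hax, hxb⟩)
    · exact Or.inl (mk_one N)
    · exact Or.inr ⟨fun h => hy ((eq_one_iff y).mp h), a, Commute.quotientMk ha, b,
        Commute.quotientMk hb, cosetLE_mk_of_le hax, cosetLE_mk_of_le hxb⟩

theorem asymp_mk_iff (hN : IsPreceqInitial N) (hc : AsympOfCommutatorMem N) (hx : x ∉ N)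
    (hy : y ∉ N) :
    Asymp (· * ·) (1 : G ⧸ N) (CosetLE N) x y ↔ Asymp (· * ·) (1 : G) (· ≤ ·) x y :=
  and_congr (preceq_mk_iff hN hc hx hy) (preceq_mk_iff hN hc hy hx)

theorem Scaling.exists_mem_cent_mk_eq (h1 : GOG1 (· * ·) (1 : G) (· < ·) (· ≤ ·))
    (hc : AsympOfCommutatorMem N) (hs : Scaling (· * ·) (1 : G) (·⁻¹) (· < ·) (· ≤ ·) s)
    (hsN : s ∉ N) {a' : G ⧸ N} (ha' : a' ∈ Cent (· * ·) (s : G ⧸ N)) :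
    ∃ c ∈ Cent (· * ·) s, (c : G ⧸ N) = a' := by
  obtain ⟨a, rfl⟩ := mk_surjective a'
  by_cases ha : a ∈ N
  · exact ⟨1, Commute.one_left s, by rwa [mk_one, eq_comm, eq_one_iff]⟩
  obtain ⟨c, hcs, hc1, -, hnot⟩ := hs.2.2 a (hc.asymp ha hsN ha')
  refine ⟨c, hcs, ?_⟩
  by_contra hca
  have hcaN : c * a⁻¹ ∉ N := by
    rwa [← eq_one_iff, mk_mul, mk_inv, mul_inv_eq_one]
  refine hnot (hs.preceq h1 (hc.asymp hcaN hsN ?_) hcs hc1)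
  rw [mk_mul, mk_inv]
  exact (Commute.quotientMk hcs).mul_left (Commute.inv_left ha')

theorem Scaling.quotientMk (hN : IsPreceqInitial N) (hc : AsympOfCommutatorMem N)
    (h1 : GOG1 (· * ·) (1 : G) (· < ·) (· ≤ ·))
    (hs : Scaling (· * ·) (1 : G) (·⁻¹) (· < ·) (· ≤ ·) s) (hsN : s ∉ N) :
    Scaling (· * ·) (1 : G ⧸ N) (·⁻¹) (CosetLT N) (CosetLE N) s := by
  refine ⟨hN.cosetLT_one_mk_iff.mpr ⟨hsN, hs.1⟩, fun a' ha' b' hb' => ?_, fun f' hfs => ?_⟩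
  · obtain ⟨a, ha, rfl⟩ := hs.exists_mem_cent_mk_eq h1 hc hsN ha'
    obtain ⟨b, hb, rfl⟩ := hs.exists_mem_cent_mk_eq h1 hc hsN hb'
    exact Commute.quotientMk (hs.2.1 a ha b hb)
  obtain ⟨f, rfl⟩ := mk_surjective f'
  have hfN : f ∉ N := by
    intro hf
    rw [(eq_one_iff f).mpr hf] at hfs
    exact hsN ((eq_one_iff s).mp (preceq_one_iff.mp hfs.2))
  obtain ⟨c, hcs, hc1, hsim, hnot⟩ := hs.2.2 f ((asymp_mk_iff hN hc hfN hsN).mp hfs)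
  have hcN : c ∉ N := fun h => hsN (hN c h s (preceq_of_mem_cent (Commute.symm hcs) hc1))
  refine ⟨c, Commute.quotientMk hcs, fun h => hcN ((eq_one_iff c).mp h), ?_⟩
  show Prec (· * ·) (1 : G ⧸ N) (CosetLE N) ((c * f⁻¹ : G) : G ⧸ N) c
  by_cases hcf : c * f⁻¹ ∈ N
  · rw [(eq_one_iff _).mpr hcf]
    exact ⟨Or.inl rfl, fun h => hcN ((eq_one_iff c).mp (preceq_one_iff.mp h))⟩
  · exact ⟨(preceq_mk_iff hN hc hcf hcN).mpr hsim,
      fun h => hnot ((preceq_mk_iff hN hc hcN hcf).mp h)⟩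

theorem isOrderedGroup_quotient (hN : IsPreceqInitial N) :
    IsOrderedGroup ((· * ·) : G ⧸ N → G ⧸ N → G ⧸ N) 1 (·⁻¹) (CosetLT N) := by
  refine ⟨mul_assoc, one_mul, mul_one, inv_mul_cancel, fun a h => h.1 rfl, ?_, ?_, ?_⟩
  · intro a b c hab hbc
    obtain ⟨x, rfl⟩ := mk_surjective a
    obtain ⟨y, rfl⟩ := mk_surjective b
    obtain ⟨z, rfl⟩ := mk_surjective c
    have hxy := (hN.cosetLT_mk_iff.mp hab).2
    refine hN.cosetLT_mk_iff.mpr ⟨fun hxz => ?_, hxy.trans (hN.cosetLT_mk_iff.mp hbc).2⟩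
    rw [← hxz, hN.cosetLT_mk_iff] at hbc
    exact lt_asymm hxy hbc.2
  · intro a b
    obtain ⟨x, rfl⟩ := mk_surjective a
    obtain ⟨y, rfl⟩ := mk_surjective b
    by_cases hxy : (x : G ⧸ N) = y
    · exact Or.inr (Or.inl hxy)
    rcases lt_or_gt_of_ne (fun h => hxy (congrArg _ h)) with h | h
    · exact Or.inl ⟨hxy, x, y, rfl, rfl, h⟩
    · exact Or.inr (Or.inr ⟨Ne.symm hxy, y, x, rfl, rfl, h⟩)
  · intro a b c hbc
    obtain ⟨f, rfl⟩ := mk_surjective a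
    obtain ⟨x, rfl⟩ := mk_surjective b
    obtain ⟨y, rfl⟩ := mk_surjective c
    obtain ⟨hxy, hlt⟩ := hN.cosetLT_mk_iff.mp hbc
    simp only [← mk_mul, hN.cosetLT_mk_iff]
    exact ⟨⟨by simpa using hxy, mul_lt_mul_right hlt f⟩,
      ⟨by simpa using hxy, mul_lt_mul_left hlt f⟩⟩

theorem gog1_quotient (hN : IsPreceqInitial N) (hc : AsympOfCommutatorMem N)
    (h1 : GOG1 (· * ·) (1 : G) (· < ·) (· ≤ ·)) :
    GOG1 ((· * ·) : G ⧸ N → G ⧸ N → G ⧸ N) 1 (CosetLT N) (CosetLE N) := by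
  intro f' g' hf hg hgf g₀' hg₀
  rcases hgf with hgf | rfl
  swap
  · exact ⟨g₀', hg₀, Or.inr rfl⟩
  obtain ⟨f, rfl⟩ := mk_surjective f'
  obtain ⟨g, rfl⟩ := mk_surjective g'
  rw [hN.cosetLT_one_mk_iff] at hf hg
  obtain ⟨g₀, rfl, hg₀g⟩ := hc.exists_mk_eq_preceq hg.1 hg₀
  obtain ⟨b, hb, hg₀b⟩ := hg₀g.exists_le_mem_cent
  obtain ⟨f₀, hf₀, hbf₀⟩ := h1 f g hf.2 hg.2 (hN.cosetLT_mk_iff.mp hgf).2.le b hb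
  exact ⟨f₀, Commute.quotientMk hf₀, cosetLE_mk_of_le (hg₀b.trans hbf₀)⟩

theorem gog2_quotient (hN : IsPreceqInitial N)
    (h2 : GOG2 (· * ·) (1 : G) (· < ·)) :
    GOG2 ((· * ·) : G ⧸ N → G ⧸ N → G ⧸ N) 1 (CosetLT N) := by
  intro f' g' hf hg hcent
  obtain ⟨f, rfl⟩ := mk_surjective f'
  obtain ⟨g, rfl⟩ := mk_surjective g'
  rw [hN.cosetLT_one_mk_iff] at hf hg
  have hfg : ¬ Commute (f : G ⧸ N) g := fun h => (hcent _ h).1 rfl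
  have hgf := h2 f g hf.2 hg.2 fun h hh =>
    (hN.cosetLT_mk_iff.mp (hcent _ (Commute.quotientMk hh))).2
  show CosetLT N ((g * f : G) : G ⧸ N) (f * g : G)
  refine hN.cosetLT_mk_iff.mpr ⟨fun h => hfg ?_, hgf⟩
  rw [mk_mul, mk_mul] at h
  exact h.symm

theorem gog3_quotient (hN : IsPreceqInitial N) (hc : AsympOfCommutatorMem N)
    (h1 : GOG1 (· * ·) (1 : G) (· < ·) (· ≤ ·))
    (h3 : GOG3 (· * ·) (1 : G) (·⁻¹) (· < ·) (· ≤ ·)) :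
    GOG3 ((· * ·) : G ⧸ N → G ⧸ N → G ⧸ N) 1 (·⁻¹) (CosetLT N) (CosetLE N) := by
  intro g' hg
  obtain ⟨g, rfl⟩ := mk_surjective g'
  have hgN : g ∉ N := fun h => hg ((eq_one_iff g).mpr h)
  obtain ⟨s, hs, hsg⟩ := h3 g fun h => hgN (h ▸ N.one_mem)
  have hsN : s ∉ N := fun h => hgN (hN s h g hsg.2)
  exact ⟨s, hs.quotientMk hN hc h1 hsN, (asymp_mk_iff hN hc hsN hgN).mpr hsg⟩

end OrderedQuotient

end GOG

theorem stmt_18 {G : Type*} [Group G] [LinearOrder G]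
    [CovariantClass G G (· * ·) (· < ·)]
    [CovariantClass G G (Function.swap (· * ·)) (· < ·)]
    (h1 : GOG.GOG1 (· * ·) (1 : G) (· < ·) (· ≤ ·))
    (h2 : GOG.GOG2 (· * ·) (1 : G) (· < ·))
    (h3 : GOG.GOG3 (· * ·) (1 : G) (·⁻¹) (· < ·) (· ≤ ·))
    (N : Subgroup G) [N.Normal]
    (hinit : ∀ f ∈ N, ∀ g : G, GOG.Preceq (· * ·) (1 : G) (· ≤ ·) g f → g ∈ N)
    (hcomm : ∀ f g : G, f ∉ N → g ∉ N → f⁻¹ * g⁻¹ * f * g ∈ N →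
      GOG.Asymp (· * ·) (1 : G) (· ≤ ·) f g) :
    GOG.IsGrowthOrderGroup
      ((· * ·) : G ⧸ N → G ⧸ N → G ⧸ N) (1 : G ⧸ N) ((·⁻¹) : G ⧸ N → G ⧸ N)
      (fun a b : G ⧸ N => a ≠ b ∧ ∃ g h : G,
        (QuotientGroup.mk g : G ⧸ N) = a ∧ (QuotientGroup.mk h : G ⧸ N) = b ∧ g < h)
      (fun a b : G ⧸ N => (a ≠ b ∧ ∃ g h : G,
        (QuotientGroup.mk g : G ⧸ N) = a ∧ (QuotientGroup.mk h : G ⧸ N) = b ∧ g < h) ∨ a = b) :=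
  ⟨GOG.isOrderedGroup_quotient hinit, GOG.gog1_quotient hinit hcomm h1,
    GOG.gog2_quotient hinit h2, GOG.gog3_quotient hinit hcomm h1 h3⟩
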